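/- Let $S$ be a string, $\tau \ge 1$, and let $j, j' \in \mathsf{R}(\tau,S)$ be two positions with $\mathrm{LCE}_S(j,j') \ge 3\tau-1$, both of type $-1$. If $\mathrm{rend}(j) - j < \mathrm{rend}(j') - j'$, then $S[j..|S|] \prec S[j'..|S|]$ lexicographically, where $\mathrm{rend}(i)$ denotes the end position of the longest prefix of $S[i..|S|]$ having period $\mathrm{per}(S[i..i+3\tau-2])$, and type $-1$ means $\mathrm{rend}(i) = |S|+1$ or $S[\mathrm{rend}(i)] \prec S[\mathrm{rend}(i)-p]$ with $p$ the period. -/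
import Mathlib

/-- Length of the longest common prefix of two lists. -/
def lcpLen {α : Type*} [DecidableEq α] : List α → List α → ℕ
  | a :: s, b :: t => if a = b then lcpLen s t + 1 else 0
  | _, _ => 0

/-- The fragment `T[a..a+len)` of a (1-indexed) text `T : ℕ → α`. -/
def frag {α : Type*} (T : ℕ → α) (a len : ℕ) : List α :=
  (List.range len).map (fun t => T (a + t))

/-- The suffix `T[j..n]` of a text of length `n`. -/
def suff {α : Type*} (T : ℕ → α) (n j : ℕ) : List α := frag T j (n + 1 - j)

/-- The fragment `T^∞[j..j+ℓ)` of the infinite periodic extension of `T[1..n]`. -/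
def tinf {α : Type*} (T : ℕ → α) (n j ℓ : ℕ) : List α :=
  (List.range ℓ).map (fun t => T ((j + t - 1) % n + 1))

/-- `p` is a period of the list `X`. -/
def hasPer {α : Type*} (X : List α) (p : ℕ) : Prop :=
  ∀ i, i + p < X.length → X[i]? = X[i + p]?

/-- The shortest period of a list. -/
noncomputable def per {α : Type*} (X : List α) : ℕ := sInf {p | 1 ≤ p ∧ hasPer X p}

/-- `runEnd S n i p` is the maximal `e ≤ n+1` such that `S[i..e)` has period `p`,
i.e. `S[i..runEnd S n i p)` is the longest prefix of `S[i..n]` with period `p`. -/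
noncomputable def runEnd {α : Type*} (S : ℕ → α) (n i p : ℕ) : ℕ :=
  sSup {e | i ≤ e ∧ e ≤ n + 1 ∧ ∀ t, i ≤ t → t + p < e → S t = S (t + p)}

section Aux

variable {α : Type*}

lemma frag_length (T : ℕ → α) (a len : ℕ) : (frag T a len).length = len := by
  simp [frag]

lemma frag_succ (T : ℕ → α) (a n : ℕ) : frag T a (n + 1) = T a :: frag T (a + 1) n := by
  simp only [frag, List.range_succ_eq_map, List.map_cons, List.map_map]
  refine congrArg₂ _ (by simp) ?_
  apply List.map_congr_left
  intro t _
  simp [Function.comp]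
  ring_nf

lemma frag_getElem? (T : ℕ → α) (a len t : ℕ) (h : t < len) :
    (frag T a len)[t]? = some (T (a + t)) := by
  simp [frag, List.getElem?_map, List.getElem?_range, h]

lemma frag_lt_of_prefix [LinearOrder α] (T : ℕ → α) :
    ∀ (m a b lb : ℕ), (∀ t, t < m → T (a + t) = T (b + t)) → m < lb →
      frag T a m < frag T b lb := by
  intro m
  induction m with
  | zero =>
    intro a b lb _ hlb
    obtain ⟨lb', rfl⟩ := Nat.exists_eq_add_of_lt hlb
    rw [show 0 + lb' + 1 = lb' + 1 by omega, frag_succ]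
    simp only [frag]
    exact List.Lex.nil
  | succ m ih =>
    intro a b lb h hlb
    obtain ⟨lb', rfl⟩ : ∃ lb'', lb = lb'' + 1 := ⟨lb - 1, by omega⟩
    rw [frag_succ, frag_succ]
    have h0 : T a = T b := by have := h 0 (by omega); simpa using this
    rw [h0]
    exact List.Lex.cons (ih (a+1) (b+1) lb'
      (fun t ht => by have := h (t+1) (by omega); rw [show a + (t+1) = a+1+t by omega,
        show b + (t+1) = b+1+t by omega] at this; exact this) (by omega))

lemma frag_lt_of_mismatch [LinearOrder α] (T : ℕ → α) :
    ∀ (m a b la lb : ℕ), (∀ t, t < m → T (a + t) = T (b + t)) → m < la → m < lb →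
      T (a + m) < T (b + m) → frag T a la < frag T b lb := by
  intro m
  induction m with
  | zero =>
    intro a b la lb _ hla hlb hm
    obtain ⟨la', rfl⟩ : ∃ x, la = x + 1 := ⟨la - 1, by omega⟩
    obtain ⟨lb', rfl⟩ : ∃ x, lb = x + 1 := ⟨lb - 1, by omega⟩
    rw [frag_succ, frag_succ]
    exact List.Lex.rel (by simpa using hm)
  | succ m ih =>
    intro a b la lb h hla hlb hm
    obtain ⟨la', rfl⟩ : ∃ x, la = x + 1 := ⟨la - 1, by omega⟩
    obtain ⟨lb', rfl⟩ : ∃ x, lb = x + 1 := ⟨lb - 1, by omega⟩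
    rw [frag_succ, frag_succ]
    have h0 : T a = T b := by have := h 0 (by omega); simpa using this
    rw [h0]
    refine List.Lex.cons (ih (a+1) (b+1) la' lb'
      (fun t ht => by have := h (t+1) (by omega); rw [show a + (t+1) = a+1+t by omega,
        show b + (t+1) = b+1+t by omega] at this; exact this) (by omega) (by omega) ?_)
    rw [show a+1+m = a + (m+1) by omega, show b+1+m = b + (m+1) by omega]
    exact hm

lemma lcpLen_le_left [DecidableEq α] : ∀ (X Y : List α), lcpLen X Y ≤ X.length := by
  intro X
  induction X with
  | nil => intro Y; cases Y <;> simp [lcpLen]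
  | cons a s ih =>
    intro Y
    cases Y with
    | nil => simp [lcpLen]
    | cons b t =>
      by_cases hab : a = b <;> simp [lcpLen, hab]
      exact ih t

lemma lcpLen_le_right [DecidableEq α] : ∀ (X Y : List α), lcpLen X Y ≤ Y.length := by
  intro X
  induction X with
  | nil => intro Y; cases Y <;> simp [lcpLen]
  | cons a s ih =>
    intro Y
    cases Y with
    | nil => simp [lcpLen]
    | cons b t =>
      by_cases hab : a = b <;> simp [lcpLen, hab]
      · exact ih t

lemma lcpLen_agree [DecidableEq α] :
    ∀ (X Y : List α) (t : ℕ), t < lcpLen X Y → X[t]? = Y[t]? := by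
  intro X
  induction X with
  | nil => intro Y t ht; cases Y <;> simp [lcpLen] at ht
  | cons a s ih =>
    intro Y t ht
    cases Y with
    | nil => simp [lcpLen] at ht
    | cons b t' =>
      by_cases hab : a = b
      · cases t with
        | zero => simp [hab]
        | succ u =>
          simp only [lcpLen, hab, if_pos] at ht
          simpa using ih t' u (by omega)
      · simp [lcpLen, hab] at ht

lemma per_spec (X : List α) (h : 1 ≤ X.length) : 1 ≤ per X ∧ hasPer X (per X) := by
  have hmem : X.length ∈ {p | 1 ≤ p ∧ hasPer X p} :=
    ⟨h, fun i hi => absurd hi (by omega)⟩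
  exact Nat.sInf_mem ⟨_, hmem⟩

end Aux

/-- Lemma `lm:exp`(2): if `j, j' ∈ R(τ,S)` with `LCE_S(j,j') ≥ 3τ-1` both have type `-1`
and `rend(j) - j < rend(j') - j'`, then `S[j..|S|] ≺ S[j'..|S|]`.  Here `rend(i)` ends the
longest prefix of `S[i..|S|]` with period `per(S[i..i+3τ-2])`, and type `-1` means
`rend(i) = |S|+1` or `S[rend(i)] ≺ S[rend(i) - p]`. -/
theorem type_neg_shorter_run_lt {α : Type*} [LinearOrder α] (S : ℕ → α) (k τ : ℕ)
    (hτ : 1 ≤ τ) (j j' : ℕ)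
    (hj : 1 ≤ j) (hjk : j + 3 * τ ≤ k + 2) (hj' : 1 ≤ j') (hj'k : j' + 3 * τ ≤ k + 2)
    (hpτ : 3 * per (frag S j (3 * τ - 1)) ≤ τ)
    (hp'τ : 3 * per (frag S j' (3 * τ - 1)) ≤ τ)
    (hlce : 3 * τ - 1 ≤ lcpLen (suff S k j) (suff S k j'))
    (htypej : runEnd S k j (per (frag S j (3 * τ - 1))) = k + 1 ∨
      (runEnd S k j (per (frag S j (3 * τ - 1))) ≤ k ∧
        S (runEnd S k j (per (frag S j (3 * τ - 1)))) <
          S (runEnd S k j (per (frag S j (3 * τ - 1))) - per (frag S j (3 * τ - 1)))))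
    (htypej' : runEnd S k j' (per (frag S j' (3 * τ - 1))) = k + 1 ∨
      (runEnd S k j' (per (frag S j' (3 * τ - 1))) ≤ k ∧
        S (runEnd S k j' (per (frag S j' (3 * τ - 1)))) <
          S (runEnd S k j' (per (frag S j' (3 * τ - 1))) - per (frag S j' (3 * τ - 1)))))
    (hlen : runEnd S k j (per (frag S j (3 * τ - 1))) - j <
      runEnd S k j' (per (frag S j' (3 * τ - 1))) - j') :
    suff S k j < suff S k j' := by
  set L : ℕ := 3 * τ - 1 with hL
  -- lengths of the two suffixes
  have hlenj : (suff S k j).length = k + 1 - j := by simp [suff, frag_length]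
  have hlenj' : (suff S k j').length = k + 1 - j' := by simp [suff, frag_length]
  have hLj : L ≤ k + 1 - j := by
    have := (lcpLen_le_left (suff S k j) (suff S k j')).trans_eq hlenj
    omega
  have hLj' : L ≤ k + 1 - j' := by
    have := (lcpLen_le_right (suff S k j) (suff S k j')).trans_eq hlenj'
    omega
  -- agreement on the first L characters
  have hbase : ∀ t, t < L → S (j + t) = S (j' + t) := by
    intro t ht
    have h1 := lcpLen_agree (suff S k j) (suff S k j') t (by omega)
    rw [suff, suff, frag_getElem? _ _ _ _ (by omega), frag_getElem? _ _ _ _ (by omega)] at h1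
    exact Option.some.injEq _ _ ▸ (by simpa using h1)
  -- the two local fragments coincide, hence same period
  have hfrag_eq : frag S j L = frag S j' L := by
    apply List.ext_getElem?
    intro t
    by_cases ht : t < L
    · rw [frag_getElem? _ _ _ _ ht, frag_getElem? _ _ _ _ ht, hbase t ht]
    · rw [List.getElem?_eq_none, List.getElem?_eq_none] <;>
        simp [frag_length] <;> omega
  set p : ℕ := per (frag S j L) with hp
  have hpp' : per (frag S j' L) = p := by rw [hp, hfrag_eq]
  rw [hpp'] at hp'τ htypej' hlen
  have hLpos : 1 ≤ L := by omega
  obtain ⟨hp1, hper⟩ := per_spec (frag S j L) (by rw [frag_length]; omega)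
  rw [← hp] at hp1 hper
  -- period fact on characters
  have hperS : ∀ i, i + p < L → S (j + i) = S (j + (i + p)) := by
    intro i hi
    have := hper i (by rw [frag_length]; exact hi)
    rw [frag_getElem? _ _ _ _ (by omega), frag_getElem? _ _ _ _ hi] at this
    simpa using this
  -- run end sets
  set E : Set ℕ := {e | j ≤ e ∧ e ≤ k + 1 ∧ ∀ t, j ≤ t → t + p < e → S t = S (t + p)} with hE
  set E' : Set ℕ := {e | j' ≤ e ∧ e ≤ k + 1 ∧ ∀ t, j' ≤ t → t + p < e → S t = S (t + p)} with hE'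
  have hEbdd : BddAbove E := ⟨k + 1, fun e he => he.2.1⟩
  have hE'bdd : BddAbove E' := ⟨k + 1, fun e he => he.2.1⟩
  have hjE : j + L ∈ E := by
    refine ⟨by omega, by omega, ?_⟩
    intro t htj htp
    have := hperS (t - j) (by omega)
    rw [show j + (t - j) = t by omega, show j + (t - j + p) = t + p by omega] at this
    exact this
  have hj'E : j' ∈ E' := ⟨le_rfl, by omega, fun t ht htp => by omega⟩
  have hEne : E.Nonempty := ⟨_, hjE⟩
  have hE'ne : E'.Nonempty := ⟨_, hj'E⟩
  have heE : runEnd S k j p ∈ E := Nat.sSup_mem hEne hEbdd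
  have heE' : runEnd S k j' p ∈ E' := Nat.sSup_mem hE'ne hE'bdd
  set e : ℕ := runEnd S k j p with he
  set e' : ℕ := runEnd S k j' p with he'
  have heL : j + L ≤ e := le_csSup hEbdd hjE
  obtain ⟨hje, hek, hPe⟩ := heE
  obtain ⟨hj'e, he'k, hPe'⟩ := heE'
  set ℓ : ℕ := e - j with hℓ
  have hℓ' : ℓ < e' - j' := hlen
  have hℓL : L ≤ ℓ := by omega
  have hpτ3 : p ≤ τ := by omega
  -- agreement on the first ℓ characters
  have agree : ∀ t, t < ℓ → S (j + t) = S (j' + t) := by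
    intro t
    induction t using Nat.strong_induction_on with
    | _ t ih =>
      intro ht
      by_cases hcase : t < L
      · exact hbase t hcase
      · have htp : p ≤ t := by omega
        have h1 : S (j + (t - p)) = S (j + t) := by
          have := hPe (j + (t - p)) (by omega) (by omega)
          rwa [show j + (t - p) + p = j + t by omega] at this
        have h2 : S (j' + (t - p)) = S (j' + t) := by
          have := hPe' (j' + (t - p)) (by omega) (by omega)
          rwa [show j' + (t - p) + p = j' + t by omega] at this
        rw [← h1, ← h2]
        exact ih (t - p) (by omega) (by omega)
  -- conclude
  rcases htypej with hcase | ⟨hek', hmis⟩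
  · -- run reaches the end of the string: suffix at j is a strict prefix
    have heq : ℓ = k + 1 - j := by omega
    rw [suff, suff, ← heq]
    exact frag_lt_of_prefix S ℓ j j' (k + 1 - j') agree (by omega)
  · -- mismatch at position ℓ
    have heℓ : e = j + ℓ := by omega
    have hja : S (j + ℓ) < S (j + (ℓ - p)) := by
      rw [heℓ, show j + ℓ - p = j + (ℓ - p) by omega] at hmis
      exact hmis
    have h2 : S (j' + (ℓ - p)) = S (j' + ℓ) := by
      have := hPe' (j' + (ℓ - p)) (by omega) (by omega)
      rwa [show j' + (ℓ - p) + p = j' + ℓ by omega] at this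
    have hmm : S (j + ℓ) < S (j' + ℓ) := by
      rw [← h2, ← agree (ℓ - p) (by omega)]
      exact hja
    rw [suff, suff]
    exact frag_lt_of_mismatch S ℓ j j' (k + 1 - j) (k + 1 - j') agree
      (by omega) (by omega) hmm
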